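/- Let Q^τ : X^τ × A → ℝ be L_Q-Lipschitz in the action argument, π^τ a policy on X^τ, and V^τ(x^τ) = E_{a∼π^τ(·|x^τ)}[Q^τ(x^τ,a)]. Let π be a policy on X and b a kernel from X to X^τ. Then for every x, E_{x^τ∼b(·|x), a∼π(·|x)}[V^τ(x^τ) − Q^τ(x^τ,a)] ≤ L_Q · E_{x^τ∼b(·|x)}[W₁(π^τ(·|x^τ), π(·|x))]. -/

import Mathlib

open scoped ENNReal

/-- Expectation of a real-valued function under a `PMF` on a finite type. -/
noncomputable def Epmf {α : Type*} [Fintype α] (μ : PMF α) (f : α → ℝ) : ℝ :=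
  ∑ a, (μ a).toReal * f a

/-- The L1-Wasserstein distance between two probability distributions on a finite
metric space, defined via couplings. -/
noncomputable def W1 {α : Type*} [Fintype α] [MetricSpace α] (μ ν : PMF α) : ℝ :=
  sInf { c | ∃ κ : PMF (α × α), PMF.map Prod.fst κ = μ ∧ PMF.map Prod.snd κ = ν ∧
      Epmf κ (fun p => dist p.1 p.2) = c }

/-!
Couple `μ = πτ(·|xτ)` and `ν = π(·|x)` by `κ`. Then
`E_μ Q − E_ν Q = E_κ[Q a₁ − Q a₂] ≤ L_Q · E_κ[d(a₁, a₂)]`, and taking the infimum over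
couplings gives `E_{a∼ν}[Vτ(xτ) − Qτ(xτ, a)] ≤ L_Q · W₁(μ, ν)` for each `xτ`; averaging over
`xτ ∼ b(·|x)` gives the theorem.
-/

lemma PMF.sum_toReal_eq_one {α : Type*} [Fintype α] (μ : PMF α) : ∑ a, (μ a).toReal = 1 := by
  rw [← ENNReal.toReal_sum fun a _ => μ.apply_ne_top a, ← tsum_fintype (L := .unconditional _),
    μ.tsum_coe, ENNReal.toReal_one]

lemma PMF.exists_coupling {α : Type*} (μ ν : PMF α) :
    ∃ κ : PMF (α × α), κ.map Prod.fst = μ ∧ κ.map Prod.snd = ν := by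
  refine ⟨μ.bind fun a => ν.map (Prod.mk a), ?_, ?_⟩ <;> simp only [PMF.map_bind, PMF.map_comp]
  · exact (congrArg μ.bind (funext fun a => PMF.map_const ν a)).trans μ.bind_pure
  · exact (congrArg μ.bind (funext fun a => PMF.map_id ν)).trans (μ.bind_const ν)

lemma dist_eq_zero_of_subsingleton {α : Type*} [PseudoMetricSpace α] [Subsingleton α] (a b : α) :
    dist a b = 0 := by
  rw [Subsingleton.elim a b, dist_self]

section Epmf

variable {α β : Type*} [Fintype α] [Fintype β]

lemma Epmf_const (μ : PMF α) (c : ℝ) : Epmf μ (fun _ => c) = c := by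
  rw [Epmf, ← Finset.sum_mul, μ.sum_toReal_eq_one, one_mul]

lemma Epmf_mono (μ : PMF α) {f g : α → ℝ} (h : f ≤ g) : Epmf μ f ≤ Epmf μ g :=
  Finset.sum_le_sum fun a _ => mul_le_mul_of_nonneg_left (h a) ENNReal.toReal_nonneg

lemma Epmf_const_mul (μ : PMF α) (c : ℝ) (f : α → ℝ) :
    Epmf μ (fun a => c * f a) = c * Epmf μ f := by
  simp only [Epmf, Finset.mul_sum, mul_left_comm]

lemma Epmf_sub (μ : PMF α) (f g : α → ℝ) :
    Epmf μ (fun a => f a - g a) = Epmf μ f - Epmf μ g := by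
  simp only [Epmf, mul_sub, Finset.sum_sub_distrib]

lemma Epmf_const_sub (μ : PMF α) (c : ℝ) (f : α → ℝ) :
    Epmf μ (fun a => c - f a) = c - Epmf μ f := by
  rw [Epmf_sub, Epmf_const]

lemma Epmf_map (κ : PMF β) (f : β → α) (g : α → ℝ) :
    Epmf (κ.map f) g = Epmf κ (g ∘ f) := by
  classical
  have hfiber : ∀ a, (κ.map f a).toReal = ∑ b with f b = a, (κ b).toReal := by
    intro a
    rw [PMF.map_apply, tsum_fintype, ← ENNReal.toReal_sum fun b _ => κ.apply_ne_top b,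
      Finset.sum_filter]
    simp_rw [eq_comm]
  simp only [Epmf, hfiber, Finset.sum_mul, Function.comp_apply]
  rw [← Finset.sum_fiberwise Finset.univ f]
  refine Finset.sum_congr rfl fun a _ => Finset.sum_congr rfl fun b hb => ?_
  rw [(Finset.mem_filter.1 hb).2]

lemma Epmf_sub_Epmf_le_of_coupling {Q : α → ℝ} {c : α → α → ℝ}
    (hQ : ∀ a₁ a₂, Q a₁ - Q a₂ ≤ c a₁ a₂) {μ ν : PMF α} {κ : PMF (α × α)}
    (hκμ : κ.map Prod.fst = μ) (hκν : κ.map Prod.snd = ν) :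
    Epmf μ Q - Epmf ν Q ≤ Epmf κ (fun p => c p.1 p.2) := by
  rw [← hκμ, ← hκν, Epmf_map, Epmf_map, ← Epmf_sub]
  exact Epmf_mono κ fun p => hQ p.1 p.2

end Epmf

section W1

variable {α : Type*} [Fintype α] [MetricSpace α]

lemma le_mul_W1_of_forall_coupling {μ ν : PMF α} {x L : ℝ} (hL : 0 ≤ L)
    (h : ∀ κ : PMF (α × α), κ.map Prod.fst = μ → κ.map Prod.snd = ν →
      x ≤ L * Epmf κ (fun p => dist p.1 p.2)) :
    x ≤ L * W1 μ ν := by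
  obtain ⟨κ, hκμ, hκν⟩ := PMF.exists_coupling μ ν
  rw [W1, ← smul_eq_mul, ← Real.sInf_smul_of_nonneg hL]
  refine le_csInf ⟨_, _, ⟨κ, hκμ, hκν, rfl⟩, rfl⟩ ?_
  rintro _ ⟨_, ⟨κ', hκ'μ, hκ'ν, rfl⟩, rfl⟩
  exact h κ' hκ'μ hκ'ν

lemma W1_eq_zero_of_subsingleton [Subsingleton α] (μ ν : PMF α) : W1 μ ν = 0 := by
  obtain ⟨κ, hκμ, hκν⟩ := PMF.exists_coupling μ ν
  rw [W1]
  refine (congrArg sInf ?_).trans (csInf_singleton (0 : ℝ))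
  refine Set.eq_singleton_iff_nonempty_unique_mem.2 ⟨⟨_, κ, hκμ, hκν, rfl⟩, ?_⟩
  rintro _ ⟨κ', -, -, rfl⟩
  simp only [dist_eq_zero_of_subsingleton, Epmf_const]

/-- The easy half of Kantorovich–Rubinstein duality. -/
theorem Epmf_sub_Epmf_le_mul_W1 {Q : α → ℝ} {L : ℝ}
    (hQ : ∀ a₁ a₂, Q a₁ - Q a₂ ≤ L * dist a₁ a₂) (μ ν : PMF α) :
    Epmf μ Q - Epmf ν Q ≤ L * W1 μ ν := by
  rcases le_or_gt 0 L with hL | hL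
  · refine le_mul_W1_of_forall_coupling hL fun κ hκμ hκν => ?_
    rw [← Epmf_const_mul]
    exact Epmf_sub_Epmf_le_of_coupling hQ hκμ hκν
  · -- A negative Lipschitz constant forces all points to coincide.
    have : Subsingleton α := ⟨fun a b => dist_le_zero.1 <| by
      nlinarith [hQ a b, hQ b a, dist_comm a b]⟩
    obtain ⟨κ, hκμ, hκν⟩ := PMF.exists_coupling μ ν
    have hcoupling := Epmf_sub_Epmf_le_of_coupling hQ hκμ hκν
    simp only [dist_eq_zero_of_subsingleton, mul_zero, Epmf_const] at hcoupling
    rwa [W1_eq_zero_of_subsingleton, mul_zero]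

end W1

/-- Delayed performance difference bound: if `Qτ` is `L_Q`-Lipschitz in the action and
`Vτ(xτ) = E_{a∼πτ(·|xτ)}[Qτ(xτ,a)]`, then for any policy `π` on `X` and belief kernel `b`,
`E_{xτ∼b(·|x), a∼π(·|x)}[Vτ(xτ) − Qτ(xτ,a)] ≤ L_Q · E_{xτ∼b(·|x)}[W₁(πτ(·|xτ), π(·|x))]`. -/
theorem delayed_performance_difference_bound
    {X Xτ A : Type*} [Fintype Xτ] [Fintype A] [MetricSpace A]
    (Qτ : Xτ → A → ℝ) (LQ : ℝ)
    (hLip : ∀ (xτ : Xτ) (a₁ a₂ : A), |Qτ xτ a₁ - Qτ xτ a₂| ≤ LQ * dist a₁ a₂)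
    (πτ : Xτ → PMF A) (π : X → PMF A) (b : X → PMF Xτ)
    (Vτ : Xτ → ℝ)
    (hVτ : ∀ xτ, Vτ xτ = Epmf (πτ xτ) (fun a => Qτ xτ a)) :
    ∀ x : X,
      Epmf (b x) (fun xτ => Epmf (π x) (fun a => Vτ xτ - Qτ xτ a))
        ≤ LQ * Epmf (b x) (fun xτ => W1 (πτ xτ) (π x)) := by
  intro x
  rw [← Epmf_const_mul]
  refine Epmf_mono (b x) fun xτ => ?_
  rw [Epmf_const_sub, hVτ]
  exact Epmf_sub_Epmf_le_mul_W1 (fun a₁ a₂ => (le_abs_self _).trans (hLip xτ a₁ a₂)) _ _
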